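/- arXiv:2309.08013 — 5 statements merged into one kernel-verified Lean document; each statement's English description precedes it below -/
import Mathlib

section
/- Let λ1 > λ2 > λ3 > 0, let e = √((λ1−λ2)/(λ1−λ3)) be the pencil eccentricity, and let ν = (ν1,ν2) satisfy ν2 > 0 and ν1 + λ3ν2 > 0. Define f(ν) = e √((ν1+λ3ν2)/(ν1+λ2ν2)). Then 0 < f(ν) < e < 1, and the billiard rotation number satisfies ρ̂(e, f(ν)) = F(ω(ν), e)/(2K(e)), where ω(ν) = arcsin √((λ1−λ3)ν2/(λ1ν2+ν1)). (This is the rotation number formula ρ(ν) for the Poncelet map of the pencil element C_ν.) -/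
open Real

/-- Incomplete elliptic integral of the first kind `F(φ,e)`. -/
noncomputable def ellF (φ e : ℝ) : ℝ :=
  ∫ τ in (0:ℝ)..φ, 1 / Real.sqrt (1 - e ^ 2 * Real.sin τ ^ 2)

/-- Complete elliptic integral of the first kind `K(e)`. -/
noncomputable def ellK (e : ℝ) : ℝ := ellF (Real.pi / 2) e

/-- The angle `ω̂(e,f)`. -/
noncomputable def omegaHat (e f : ℝ) : ℝ :=
  Real.arcsin (Real.sqrt ((e ^ 2 - f ^ 2) / (e ^ 2 * (1 - f ^ 2))))

/-- The billiard rotation number `ρ̂(e,f)`. -/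
noncomputable def rhoHat (e f : ℝ) : ℝ := ellF (omegaHat e f) e / (2 * ellK e)

/-
With `e² = (λ1−λ2)/(λ1−λ3)` and `f = e·s`, `s² = (ν1+λ3ν2)/(ν1+λ2ν2)`, the argument of
`ω̂(e,f)` reduces to `(1 − s²)/(1 − e²s²)`, and a direct computation identifies this with
`(λ1−λ3)ν2/(λ1ν2+ν1)`: both `1 − s²` and `1 − e²s²` carry the factor `λ2 − λ3`, which
cancels.
-/

lemma omegaHat_self_mul (e s : ℝ) (he : e ≠ 0) :
    omegaHat e (e * s) = arcsin √((1 - s ^ 2) / (1 - (e * s) ^ 2)) := by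
  have hdiv : (e ^ 2 - (e * s) ^ 2) / (e ^ 2 * (1 - (e * s) ^ 2))
      = (1 - s ^ 2) / (1 - (e * s) ^ 2) := by
    rw [show e ^ 2 - (e * s) ^ 2 = e ^ 2 * (1 - s ^ 2) by ring]
    exact mul_div_mul_left _ _ (pow_ne_zero 2 he)
  rw [omegaHat, hdiv]

lemma div_pos_lt_one_of_lt {α : Type*} [Field α] [LinearOrder α] [IsStrictOrderedRing α]
    {a b : α} (ha : 0 < a) (hab : a < b) : 0 < a / b ∧ a / b < 1 :=
  ⟨div_pos ha (ha.trans hab), (div_lt_one (ha.trans hab)).2 hab⟩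

lemma sqrt_pos_lt_one {x : ℝ} (hx : 0 < x ∧ x < 1) : 0 < √x ∧ √x < 1 :=
  ⟨sqrt_pos.2 hx.1, (sqrt_lt' one_pos).2 (by rw [one_pow]; exact hx.2)⟩

lemma pencil_omega_arg {α : Type*} [Field α] {l1 l2 l3 ν1 ν2 : α}
    (h13 : l1 - l3 ≠ 0) (h23 : l2 - l3 ≠ 0) (hb : ν1 + l2 * ν2 ≠ 0) :
    (1 - (ν1 + l3 * ν2) / (ν1 + l2 * ν2))
        / (1 - (l1 - l2) / (l1 - l3) * ((ν1 + l3 * ν2) / (ν1 + l2 * ν2)))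
      = (l1 - l3) * ν2 / (l1 * ν2 + ν1) := by
  have hnum : 1 - (ν1 + l3 * ν2) / (ν1 + l2 * ν2) = (l2 - l3) * ν2 / (ν1 + l2 * ν2) := by
    rw [one_sub_div hb]
    ring
  have hden : 1 - (l1 - l2) / (l1 - l3) * ((ν1 + l3 * ν2) / (ν1 + l2 * ν2))
      = (l2 - l3) * (l1 * ν2 + ν1) / ((l1 - l3) * (ν1 + l2 * ν2)) := by
    rw [div_mul_div_comm, one_sub_div (mul_ne_zero h13 hb)]
    ring
  rw [hnum, hden, div_div_div_eq,
    show (l2 - l3) * ν2 * ((l1 - l3) * (ν1 + l2 * ν2))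
      = (l2 - l3) * (ν1 + l2 * ν2) * ((l1 - l3) * ν2) by ring,
    show (ν1 + l2 * ν2) * ((l2 - l3) * (l1 * ν2 + ν1))
      = (l2 - l3) * (ν1 + l2 * ν2) * (l1 * ν2 + ν1) by ring,
    mul_div_mul_left _ _ (mul_ne_zero h23 hb)]

theorem pencil_rotation_number_general (l1 l2 l3 ν1 ν2 : ℝ)
    (h12 : l2 < l1) (h23 : l3 < l2)
    (hν2 : 0 < ν2) (hν : 0 < ν1 + l3 * ν2) :
    let e := Real.sqrt ((l1 - l2) / (l1 - l3))
    let fν := e * Real.sqrt ((ν1 + l3 * ν2) / (ν1 + l2 * ν2))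
    let ω := Real.arcsin (Real.sqrt ((l1 - l3) * ν2 / (l1 * ν2 + ν1)))
    0 < fν ∧ fν < e ∧ e < 1 ∧
      rhoHat e fν = ellF ω e / (2 * ellK e) := by
  intro e fν ω
  have hq := div_pos_lt_one_of_lt (sub_pos.2 h12) (by linarith : l1 - l2 < l1 - l3)
  have hr := div_pos_lt_one_of_lt hν (by nlinarith : ν1 + l3 * ν2 < ν1 + l2 * ν2)
  obtain ⟨he0, he1⟩ := sqrt_pos_lt_one hq
  obtain ⟨hs0, hs1⟩ := sqrt_pos_lt_one hr
  refine ⟨mul_pos he0 hs0, mul_lt_of_lt_one_right he0 hs1, he1, ?_⟩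
  rw [rhoHat, omegaHat_self_mul _ _ he0.ne', mul_pow, sq_sqrt hq.1.le, sq_sqrt hr.1.le,
    pencil_omega_arg (by linarith) (by linarith) (by nlinarith)]

/-- the Poncelet rotation number formula for an element of a pencil with
eigenvalues `λ1 > λ2 > λ3 > 0`, eccentricity `e`, and valid parameter `ν = (ν1, ν2)`. -/
theorem pencil_rotation_number (l1 l2 l3 ν1 ν2 : ℝ)
    (h12 : l2 < l1) (h23 : l3 < l2) (h3 : 0 < l3)
    (hν2 : 0 < ν2) (hν : 0 < ν1 + l3 * ν2) :
    let e := Real.sqrt ((l1 - l2) / (l1 - l3))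
    let fν := e * Real.sqrt ((ν1 + l3 * ν2) / (ν1 + l2 * ν2))
    let ω := Real.arcsin (Real.sqrt ((l1 - l3) * ν2 / (l1 * ν2 + ν1)))
    0 < fν ∧ fν < e ∧ e < 1 ∧
      rhoHat e fν = ellF ω e / (2 * ellK e) :=
  pencil_rotation_number_general l1 l2 l3 ν1 ν2 h12 h23 hν2 hν
end

section
/- If real symmetric 3×3 matrices C1 and C2 satisfy the standing assumptions, then there exists a nonsingular real 3×3 matrix M such that MᵀC1M = diag(1,1,−1) and MᵀC2M = diag(λ1, λ2, −λ3), where {λ1, λ2, λ3} are the eigenvalues of C1⁻¹C2 and they satisfy λ1 > λ2 > λ3 > 0. -/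
/-!
An eigenvector `v` of `C₁⁻¹C₂` with eigenvalue `λ` satisfies `C₂v = λC₁v`; by symmetry of `C₁`
and `C₂`, eigenvectors for distinct eigenvalues are `C₁`-orthogonal, and (SA3) makes each
`vᵀC₁v` nonzero, so rescaling an eigenbasis diagonalizes both forms with `±1` on the diagonal
of the first. The product of the three values `vᵢᵀC₁vᵢ` is `det(V)² det C₁ < 0`, and they are
not all negative because `C₁` is positive at `(1,0,0)`: exactly one is negative. If `u`, `v` are
eigenvectors for `λ`, `μ` with `uᵀC₁u > 0 > vᵀC₁v`, then `√(μ|vᵀC₁v|) u + √(λ uᵀC₁u) v` is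
isotropic for `C₂`, so by (SA3) its `C₁`-value `uᵀC₁u · |vᵀC₁v| · (μ - λ)` is negative, i.e.
`μ < λ`: the negative eigenvector belongs to the smallest eigenvalue.
-/

open Matrix Polynomial

/-- The standing assumption (SA1). -/
def SA1 (C : Matrix (Fin 3) (Fin 3) ℝ) : Prop :=
  C.IsSymm ∧ (∀ x y : ℝ, (x, y) ≠ (0, 0) → 0 < ![x, y, 0] ⬝ᵥ C.mulVec ![x, y, 0]) ∧
    C.det < 0

theorem Real.inv_sqrt_abs_sq_mul_self (x : ℝ) : (√|x|)⁻¹ ^ 2 * x = Real.sign x := by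
  rcases lt_trichotomy x 0 with hx | rfl | hx
  · rw [inv_pow, Real.sq_sqrt (abs_nonneg x), abs_of_neg hx, Real.sign_of_neg hx,
      inv_mul_eq_div, div_neg, div_self hx.ne]
  · simp
  · rw [inv_pow, Real.sq_sqrt (abs_nonneg x), abs_of_pos hx, Real.sign_of_pos hx,
      inv_mul_cancel₀ hx.ne']

theorem Polynomial.exists_lt_lt_mul_X_sub_C_eq {a b c : ℝ} (ha : 0 < a) (hb : 0 < b) (hc : 0 < c)
    (hab : a ≠ b) (hac : a ≠ c) (hbc : b ≠ c) :
    ∃ x y z : ℝ, y < x ∧ z < y ∧ 0 < z ∧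
      (X - C a) * (X - C b) * (X - C c) = (X - C x) * (X - C y) * (X - C z) := by
  rcases hab.lt_or_gt with h₁ | h₁ <;> rcases hac.lt_or_gt with h₂ | h₂ <;>
    rcases hbc.lt_or_gt with h₃ | h₃ <;>
    first
    | exact ⟨a, b, c, by linarith, by linarith, by linarith, by ring⟩
    | exact ⟨a, c, b, by linarith, by linarith, by linarith, by ring⟩
    | exact ⟨b, a, c, by linarith, by linarith, by linarith, by ring⟩
    | exact ⟨b, c, a, by linarith, by linarith, by linarith, by ring⟩
    | exact ⟨c, a, b, by linarith, by linarith, by linarith, by ring⟩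
    | exact ⟨c, b, a, by linarith, by linarith, by linarith, by ring⟩

namespace Matrix

section CommRing

variable {n R : Type*} [Fintype n] [CommRing R] {C C₁ C₂ : Matrix n n R}

theorem exists_mulVec_eq_smul_of_isRoot_charpoly [DecidableEq n] [IsDomain R]
    {A : Matrix n n R} {t : R} (ht : A.charpoly.IsRoot t) : ∃ v ≠ 0, A *ᵥ v = t • v := by
  rw [← charpoly_toLin', ← Module.End.hasEigenvalue_iff_isRoot_charpoly] at ht
  obtain ⟨v, hv⟩ := ht.exists_hasEigenvector
  exact ⟨v, hv.2, by simpa using hv.apply_eq_smul⟩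

theorem IsSymm.dotProduct_mulVec_comm (hC : C.IsSymm) (u v : n → R) :
    u ⬝ᵥ C *ᵥ v = v ⬝ᵥ C *ᵥ u := by
  rw [dotProduct_mulVec, ← mulVec_transpose, hC.eq, dotProduct_comm]

theorem dotProduct_mulVec_eq_zero_of_mulVec_eq_smul_mulVec [IsDomain R]
    (hC₁ : C₁.IsSymm) (hC₂ : C₂.IsSymm) {a b : R} {u v : n → R}
    (hu : C₂ *ᵥ u = a • C₁ *ᵥ u) (hv : C₂ *ᵥ v = b • C₁ *ᵥ v) (hab : a ≠ b) :
    u ⬝ᵥ C₁ *ᵥ v = 0 := by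
  have h₁ : u ⬝ᵥ C₂ *ᵥ v = b * (u ⬝ᵥ C₁ *ᵥ v) := by rw [hv, dotProduct_smul, smul_eq_mul]
  have h₂ : u ⬝ᵥ C₂ *ᵥ v = a * (u ⬝ᵥ C₁ *ᵥ v) := by
    rw [hC₂.dotProduct_mulVec_comm, hu, dotProduct_smul, smul_eq_mul, hC₁.dotProduct_mulVec_comm]
  have h : (a - b) * (u ⬝ᵥ C₁ *ᵥ v) = 0 := by linear_combination h₁ - h₂
  exact (mul_eq_zero.mp h).resolve_left (sub_ne_zero.mpr hab)

theorem dotProduct_mulVec_smul_add_smul (C : Matrix n n R) {u v : n → R}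
    (huv : u ⬝ᵥ C *ᵥ v = 0) (hvu : v ⬝ᵥ C *ᵥ u = 0) (s t : R) :
    (s • u + t • v) ⬝ᵥ C *ᵥ (s • u + t • v) = s ^ 2 * (u ⬝ᵥ C *ᵥ u) + t ^ 2 * (v ⬝ᵥ C *ᵥ v) := by
  simp only [mulVec_add, mulVec_smul, dotProduct_add, add_dotProduct, dotProduct_smul,
    smul_dotProduct, huv, hvu, smul_eq_mul]
  ring

variable [DecidableEq n] {v : n → n → R}

theorem of_mul_mul_transpose_of_eq_diagonal (h : Pairwise fun i j => v i ⬝ᵥ C *ᵥ v j = 0) :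
    of v * C * (of v)ᵀ = diagonal fun i => v i ⬝ᵥ C *ᵥ v i := by
  ext i j
  rw [mul_mul_apply, transpose_transpose]
  change v i ⬝ᵥ C *ᵥ v j = _
  obtain rfl | hij := eq_or_ne i j
  · rw [diagonal_apply_eq]
  · rw [diagonal_apply_ne _ hij, h hij]

theorem of_mul_mul_transpose_of_eq_diagonal_mul {l : n → R}
    (hv : ∀ i, C₂ *ᵥ v i = l i • C₁ *ᵥ v i) (h : Pairwise fun i j => v i ⬝ᵥ C₁ *ᵥ v j = 0) :
    of v * C₂ * (of v)ᵀ = diagonal fun i => l i * (v i ⬝ᵥ C₁ *ᵥ v i) := by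
  rw [of_mul_mul_transpose_of_eq_diagonal fun i j hij => by
    simp only [hv, dotProduct_smul, h hij, smul_zero]]
  simp only [hv, dotProduct_smul, smul_eq_mul]

theorem det_of_sq_mul_det_eq_prod (h : Pairwise fun i j => v i ⬝ᵥ C *ᵥ v j = 0) :
    (of v).det ^ 2 * C.det = ∏ i, v i ⬝ᵥ C *ᵥ v i := by
  rw [← det_diagonal, ← of_mul_mul_transpose_of_eq_diagonal h, det_mul, det_mul, det_transpose]
  ring

theorem det_of_ne_zero_of_pairwise [IsDomain R] (h : Pairwise fun i j => v i ⬝ᵥ C *ᵥ v j = 0)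
    (hv : ∀ i, v i ⬝ᵥ C *ᵥ v i ≠ 0) : (of v).det ≠ 0 := by
  intro h0
  have := det_of_sq_mul_det_eq_prod h
  rw [h0, zero_pow two_ne_zero, zero_mul, eq_comm, Finset.prod_eq_zero_iff] at this
  obtain ⟨i, -, hi⟩ := this
  exact hv i hi

end CommRing

theorem exists_mulVec_eq_smul_mulVec_of_isRoot_charpoly {n K : Type*} [Fintype n]
    [DecidableEq n] [Field K] {C₁ C₂ : Matrix n n K} {t : K}
    (hC₁ : C₁.det ≠ 0) (ht : (C₁⁻¹ * C₂).charpoly.IsRoot t) :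
    ∃ v ≠ 0, C₂ *ᵥ v = t • C₁ *ᵥ v := by
  obtain ⟨v, hv0, hv⟩ := exists_mulVec_eq_smul_of_isRoot_charpoly ht
  refine ⟨v, hv0, ?_⟩
  rw [← mul_nonsing_inv_cancel_left C₁ C₂ hC₁.isUnit, ← mulVec_mulVec, hv, mulVec_smul]

section Real

variable {n : Type*} [Fintype n] {C₁ C₂ : Matrix n n ℝ}

theorem dotProduct_mulVec_self_ne_zero_of_mulVec_eq_smul_mulVec
    (hC : ∀ u : n → ℝ, u ≠ 0 → u ⬝ᵥ C₂ *ᵥ u = 0 → u ⬝ᵥ C₁ *ᵥ u < 0)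
    {t : ℝ} {v : n → ℝ} (hv0 : v ≠ 0) (hv : C₂ *ᵥ v = t • C₁ *ᵥ v) :
    v ⬝ᵥ C₁ *ᵥ v ≠ 0 := by
  intro h
  have h₂ : v ⬝ᵥ C₂ *ᵥ v = 0 := by rw [hv, dotProduct_smul, h, smul_zero]
  exact (hC v hv0 h₂).ne h

theorem lt_of_mulVec_eq_smul_mulVec (hC₁ : C₁.IsSymm)
    (hC : ∀ w : n → ℝ, w ≠ 0 → w ⬝ᵥ C₂ *ᵥ w = 0 → w ⬝ᵥ C₁ *ᵥ w < 0)
    {a b : ℝ} {u v : n → ℝ} (ha : 0 < a) (hb : 0 < b)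
    (hu : C₂ *ᵥ u = a • C₁ *ᵥ u) (hv : C₂ *ᵥ v = b • C₁ *ᵥ v) (huv : u ⬝ᵥ C₁ *ᵥ v = 0)
    (hu₁ : 0 < u ⬝ᵥ C₁ *ᵥ u) (hv₁ : v ⬝ᵥ C₁ *ᵥ v < 0) : b < a := by
  have hvu : v ⬝ᵥ C₁ *ᵥ u = 0 := by rw [hC₁.dotProduct_mulVec_comm, huv]
  set s := √(b * -(v ⬝ᵥ C₁ *ᵥ v))
  set t := √(a * (u ⬝ᵥ C₁ *ᵥ u))
  have hs : s ^ 2 = b * -(v ⬝ᵥ C₁ *ᵥ v) := Real.sq_sqrt (by nlinarith)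
  have ht : t ^ 2 = a * (u ⬝ᵥ C₁ *ᵥ u) := Real.sq_sqrt (by positivity)
  have hs0 : 0 < s := Real.sqrt_pos.mpr (by nlinarith)
  have hw0 : s • u + t • v ≠ 0 := by
    intro h
    have h' := congrArg (u ⬝ᵥ C₁ *ᵥ ·) h
    simp only [mulVec_add, mulVec_smul, dotProduct_add, dotProduct_smul, huv, smul_eq_mul,
      mulVec_zero, dotProduct_zero] at h'
    nlinarith
  have hw₂ : (s • u + t • v) ⬝ᵥ C₂ *ᵥ (s • u + t • v) = 0 := by
    rw [dotProduct_mulVec_smul_add_smul C₂ (by rw [hv, dotProduct_smul, huv, smul_zero])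
      (by rw [hu, dotProduct_smul, hvu, smul_zero]), hu, hv, dotProduct_smul, dotProduct_smul,
      smul_eq_mul, smul_eq_mul, hs, ht]
    ring
  have hw₁ := hC _ hw0 hw₂
  rw [dotProduct_mulVec_smul_add_smul C₁ huv hvu, hs, ht] at hw₁
  nlinarith [mul_neg_of_pos_of_neg hu₁ hv₁]

theorem dotProduct_mulVec_nonpos_of_diagonal_nonpos [DecidableEq n] {v : n → n → ℝ}
    (h : Pairwise fun i j => v i ⬝ᵥ C₁ *ᵥ v j = 0) (hv : (of v).det ≠ 0)
    (hnonpos : ∀ i, v i ⬝ᵥ C₁ *ᵥ v i ≤ 0) (x : n → ℝ) : x ⬝ᵥ C₁ *ᵥ x ≤ 0 := by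
  obtain ⟨y, rfl⟩ : ∃ y, (of v)ᵀ *ᵥ y = x :=
    ⟨(of v)ᵀ⁻¹ *ᵥ x, by
      rw [mulVec_mulVec, mul_nonsing_inv _ (by rwa [det_transpose, isUnit_iff_ne_zero]),
        one_mulVec]⟩
  have key : (of v)ᵀ *ᵥ y ⬝ᵥ C₁ *ᵥ ((of v)ᵀ *ᵥ y) = y ⬝ᵥ (of v * C₁ * (of v)ᵀ) *ᵥ y := by
    rw [← mulVec_mulVec, ← mulVec_mulVec, dotProduct_mulVec y, mulVec_transpose]
  rw [key, of_mul_mul_transpose_of_eq_diagonal h, dotProduct]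
  refine Finset.sum_nonpos fun i _ => ?_
  rw [mulVec_diagonal]
  nlinarith [hnonpos i, mul_self_nonneg (y i)]

theorem exists_transpose_mul_mul_eq_diagonal_sign [DecidableEq n] {l : n → ℝ} {v : n → n → ℝ}
    (hv : ∀ i, C₂ *ᵥ v i = l i • C₁ *ᵥ v i) (h : Pairwise fun i j => v i ⬝ᵥ C₁ *ᵥ v j = 0) :
    ∃ M : Matrix n n ℝ,
      Mᵀ * C₁ * M = diagonal (fun i => Real.sign (v i ⬝ᵥ C₁ *ᵥ v i)) ∧
      Mᵀ * C₂ * M = diagonal (fun i => l i * Real.sign (v i ⬝ᵥ C₁ *ᵥ v i)) := by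
  set w : n → n → ℝ := fun i => (√|v i ⬝ᵥ C₁ *ᵥ v i|)⁻¹ • v i
  have hw : ∀ i, C₂ *ᵥ w i = l i • C₁ *ᵥ w i := fun i => by
    simp only [w, mulVec_smul, hv, smul_comm (l i)]
  have hwo : Pairwise fun i j => w i ⬝ᵥ C₁ *ᵥ w j = 0 := fun i j hij => by
    simp only [w, mulVec_smul, dotProduct_smul, smul_dotProduct, h hij, smul_zero]
  have hwd : ∀ i, w i ⬝ᵥ C₁ *ᵥ w i = Real.sign (v i ⬝ᵥ C₁ *ᵥ v i) := fun i => by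
    simp only [w, mulVec_smul, dotProduct_smul, smul_dotProduct, smul_eq_mul]
    rw [← Real.inv_sqrt_abs_sq_mul_self]
    ring
  refine ⟨(of w)ᵀ, ?_, ?_⟩ <;> rw [transpose_transpose]
  · simp only [of_mul_mul_transpose_of_eq_diagonal hwo, hwd]
  · simp only [of_mul_mul_transpose_of_eq_diagonal_mul hw hwo, hwd]

end Real

theorem dotProduct_mulVec_self_signs_of_strictAnti {C₁ C₂ : Matrix (Fin 3) (Fin 3) ℝ}
    (hC₁ : C₁.IsSymm) (hdet : C₁.det < 0) {x : Fin 3 → ℝ} (hx : 0 < x ⬝ᵥ C₁ *ᵥ x)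
    (hC : ∀ u : Fin 3 → ℝ, u ≠ 0 → u ⬝ᵥ C₂ *ᵥ u = 0 → u ⬝ᵥ C₁ *ᵥ u < 0)
    {l : Fin 3 → ℝ} (hl : StrictAnti l) (hl₂ : 0 < l 2) {v : Fin 3 → Fin 3 → ℝ}
    (hv₀ : ∀ i, v i ≠ 0) (hv : ∀ i, C₂ *ᵥ v i = l i • C₁ *ᵥ v i)
    (h : Pairwise fun i j => v i ⬝ᵥ C₁ *ᵥ v j = 0) :
    0 < v 0 ⬝ᵥ C₁ *ᵥ v 0 ∧ 0 < v 1 ⬝ᵥ C₁ *ᵥ v 1 ∧ v 2 ⬝ᵥ C₁ *ᵥ v 2 < 0 := by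
  set d : Fin 3 → ℝ := fun i => v i ⬝ᵥ C₁ *ᵥ v i
  have hd : ∀ i, d i ≠ 0 := fun i =>
    dotProduct_mulVec_self_ne_zero_of_mulVec_eq_smul_mulVec hC (hv₀ i) (hv i)
  have hV := det_of_ne_zero_of_pairwise h hd
  have hprod : d 0 * d 1 * d 2 < 0 := by
    rw [← Fin.prod_univ_three, ← det_of_sq_mul_det_eq_prod h]
    exact mul_neg_of_pos_of_neg (by positivity) hdet
  have hsome : ¬ ∀ i, d i ≤ 0 := fun hall =>
    hx.not_ge (dotProduct_mulVec_nonpos_of_diagonal_nonpos h hV hall x)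
  have hord : ∀ i j, d i < 0 → 0 < d j → l i < l j := fun i j hi hj =>
    lt_of_mulVec_eq_smul_mulVec hC₁ hC (hl₂.trans_le (hl.antitone (Fin.le_last j)))
      (hl₂.trans_le (hl.antitone (Fin.le_last i))) (hv j) (hv i)
      (h fun hji => by rw [hji] at hj; exact hi.not_gt hj) hj hi
  have h₂ : d 2 < 0 := by
    refine (hd 2).lt_or_gt.resolve_right fun h₂ => hprod.not_ge ?_
    have h₀ : 0 < d 0 := (hd 0).lt_or_gt.resolve_left fun h₀ =>
      (hord 0 2 h₀ h₂).not_gt (hl (by decide))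
    have h₁ : 0 < d 1 := (hd 1).lt_or_gt.resolve_left fun h₁ =>
      (hord 1 2 h₁ h₂).not_gt (hl (by decide))
    positivity
  have h₁ : 0 < d 1 := by
    refine (hd 1).lt_or_gt.resolve_left fun h₁ => hsome fun i => ?_
    have h₀ : d 0 < 0 := by nlinarith [mul_pos_of_neg_of_neg h₁ h₂]
    fin_cases i
    exacts [h₀.le, h₁.le, h₂.le]
  exact ⟨by nlinarith [mul_neg_of_pos_of_neg h₁ h₂], h₁, h₂⟩

end Matrix

/-- Simultaneous diagonalization: under the standing assumptions there
is a nonsingular `M` with `MᵀC1M = diag(1,1,−1)` and `MᵀC2M = diag(λ1,λ2,−λ3)`, where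
`λ1 > λ2 > λ3 > 0` are the eigenvalues of `C1⁻¹C2`. -/
theorem simultaneous_diagonalization (C1 C2 : Matrix (Fin 3) (Fin 3) ℝ)
    (hC1 : SA1 C1) (hC2 : SA1 C2)
    (hSA2 : ∃ a b c : ℝ, 0 < a ∧ 0 < b ∧ 0 < c ∧ a ≠ b ∧ a ≠ c ∧ b ≠ c ∧
      (C1⁻¹ * C2).charpoly =
        (X - Polynomial.C a) * (X - Polynomial.C b) * (X - Polynomial.C c))
    (hSA3 : ∀ u : Fin 3 → ℝ, u ≠ 0 → u ⬝ᵥ C2.mulVec u = 0 → u ⬝ᵥ C1.mulVec u < 0) :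
    ∃ (M : Matrix (Fin 3) (Fin 3) ℝ) (l1 l2 l3 : ℝ),
      M.det ≠ 0 ∧ l2 < l1 ∧ l3 < l2 ∧ 0 < l3 ∧
      (C1⁻¹ * C2).charpoly =
        (X - Polynomial.C l1) * (X - Polynomial.C l2) * (X - Polynomial.C l3) ∧
      Mᵀ * C1 * M = Matrix.diagonal ![1, 1, -1] ∧
      Mᵀ * C2 * M = Matrix.diagonal ![l1, l2, -l3] := by
  obtain ⟨hC₁, hC₁pos, hC₁det⟩ := hC1
  obtain ⟨a, b, c, ha, hb, hc, hab, hac, hbc, hcp⟩ := hSA2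
  obtain ⟨l1, l2, l3, h12, h23, hl3, hsort⟩ := exists_lt_lt_mul_X_sub_C_eq ha hb hc hab hac hbc
  rw [hsort] at hcp
  have hl : StrictAnti ![l1, l2, l3] := Fin.strictAnti_iff_succ_lt.2 fun i => by
    fin_cases i <;> assumption
  have hroot : ∀ i, (C1⁻¹ * C2).charpoly.IsRoot (![l1, l2, l3] i) := fun i => by
    fin_cases i <;> simp [hcp]
  choose v hv₀ hv using fun i =>
    exists_mulVec_eq_smul_mulVec_of_isRoot_charpoly hC₁det.ne (hroot i)
  have horth : Pairwise fun i j => v i ⬝ᵥ C1 *ᵥ v j = 0 := fun i j hij =>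
    dotProduct_mulVec_eq_zero_of_mulVec_eq_smul_mulVec hC₁ hC2.1 (hv i) (hv j) (hl.injective.ne hij)
  obtain ⟨hd₀, hd₁, hd₂⟩ := dotProduct_mulVec_self_signs_of_strictAnti hC₁ hC₁det
    (hC₁pos 1 0 (by simp)) hSA3 hl hl3 hv₀ hv horth
  obtain ⟨M, hM₁, hM₂⟩ := exists_transpose_mul_mul_eq_diagonal_sign hv horth
  have hM₁' : Mᵀ * C1 * M = diagonal ![1, 1, -1] := by
    rw [hM₁]; congr 1; ext i
    fin_cases i <;> simp [Real.sign_of_pos, Real.sign_of_neg, hd₀, hd₁, hd₂]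
  refine ⟨M, l1, l2, l3, fun h => ?_, h12, h23, hl3, hcp, hM₁', ?_⟩
  · simpa [h, det_mul, Fin.prod_univ_three] using congrArg det hM₁'
  · rw [hM₂]; congr 1; ext i
    fin_cases i <;> simp [Real.sign_of_pos, Real.sign_of_neg, hd₀, hd₁, hd₂]
end

section
/- Let C1, C2 satisfy the standing assumptions with eigenvalues λ1 > λ2 > λ3 > 0 of C1⁻¹C2, and let ν = (ν1,ν2), μ = (μ1,μ2) be valid parameters with ν1μ2 − ν2μ1 > 0. Then the numbers λ̄ᵢ = (μ1+λᵢμ2)/(ν1+λᵢν2) (i = 1,2,3) are the eigenvalues of C_ν⁻¹C_μ, they satisfy λ̄1 > λ̄2 > λ̄3 > 0, and the pencil eccentricity transforms as √((λ̄1−λ̄2)/(λ̄1−λ̄3)) = √((ν1+λ3ν2)/(ν1+λ2ν2)) · √((λ1−λ2)/(λ1−λ3)). In particular, for ν = (1,0) the pencil eccentricity is invariant: √((λ̄1−λ̄2)/(λ̄1−λ̄3)) = √((λ1−λ2)/(λ1−λ3)) for every valid μ. -/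
open Matrix Polynomial

/-!
Writing `M = C₁⁻¹C₂`, every member of the pencil factors as `aC₁ + bC₂ = C₁(a + bM)`, so
`det(aC₁ + bC₂) = det C₁ · ∏ᵢ (a + λᵢb)`. Since `det(xC_ν − C_μ) = det C_ν · χ(x)` for the
characteristic polynomial `χ` of `C_ν⁻¹C_μ`, comparing the two factorizations shows that its
eigenvalues are the images of the `λᵢ` under the Möbius map `f(t) = (μ₁ + tμ₂)/(ν₁ + tν₂)`.
The identity `f(s) − f(t) = (ν₁μ₂ − ν₂μ₁)(s − t)/((ν₁ + sν₂)(ν₁ + tν₂))` then gives both the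
ordering of the new eigenvalues and the transformation rule of the eccentricity ratio.
-/

namespace Matrix

variable {n K : Type*} [Fintype n] [DecidableEq n] [Field K]

theorem det_smul_one_add_smul_of_charpoly_eq_prod {M : Matrix n n K} {s : Multiset K}
    (hM : M.charpoly = (s.map fun l => X - C l).prod) (a b : K) :
    (a • (1 : Matrix n n K) + b • M).det = (s.map fun l => a + l * b).prod := by
  have hcard : Fintype.card n = Multiset.card s := by
    rw [← M.charpoly_natDegree_eq_dim, hM, natDegree_multiset_prod_X_sub_C_eq_card]
  rcases eq_or_ne b 0 with rfl | hb
  · simp [hcard]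
  have hscalar : a • (1 : Matrix n n K) + b • M = (-b) • (scalar n (-a / b) - M) := by
    rw [smul_sub, scalar_apply, ← smul_one_eq_diagonal, smul_smul, neg_smul, sub_neg_eq_add,
      neg_div, neg_mul_neg, mul_div_cancel₀ a hb]
  rw [hscalar, det_smul, ← eval_charpoly, hM, eval_multiset_prod, Multiset.map_map, hcard,
    ← Multiset.prod_replicate, ← Multiset.map_const', ← Multiset.prod_map_mul]
  congr 1
  refine Multiset.map_congr rfl fun l _ => ?_
  simp only [Function.comp_apply, eval_sub, eval_X, eval_C]
  field_simp
  ring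

theorem smul_add_smul_eq_mul_smul_one_add_smul {A : Matrix n n K} (hA : IsUnit A.det)
    (B : Matrix n n K) (a b : K) :
    a • A + b • B = A * (a • (1 : Matrix n n K) + b • (A⁻¹ * B)) := by
  rw [Matrix.mul_add, mul_smul_comm, mul_smul_comm, Matrix.mul_one,
    mul_nonsing_inv_cancel_left _ _ hA]

theorem det_smul_add_smul_of_charpoly_eq_prod {A B : Matrix n n K} (hA : IsUnit A.det)
    {s : Multiset K} (hAB : (A⁻¹ * B).charpoly = (s.map fun l => X - C l).prod) (a b : K) :
    (a • A + b • B).det = A.det * (s.map fun l => a + l * b).prod := by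
  rw [smul_add_smul_eq_mul_smul_one_add_smul hA, det_mul,
    det_smul_one_add_smul_of_charpoly_eq_prod hAB]

theorem charpoly_inv_mul_of_charpoly_eq_prod [Infinite K] {A B : Matrix n n K}
    (hA : IsUnit A.det)
    {s : Multiset K} (hAB : (A⁻¹ * B).charpoly = (s.map fun l => X - C l).prod)
    {ν₁ ν₂ : K} (hν : ∀ l ∈ s, ν₁ + l * ν₂ ≠ 0) (μ₁ μ₂ : K) :
    ((ν₁ • A + ν₂ • B)⁻¹ * (μ₁ • A + μ₂ • B)).charpoly =
      (s.map fun l => X - C ((μ₁ + l * μ₂) / (ν₁ + l * ν₂))).prod := by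
  set P := ν₁ • A + ν₂ • B
  set Q := μ₁ • A + μ₂ • B
  have hPdet : P.det = A.det * (s.map fun l => ν₁ + l * ν₂).prod :=
    det_smul_add_smul_of_charpoly_eq_prod hA hAB ν₁ ν₂
  have hP : IsUnit P.det := by
    rw [hPdet, isUnit_iff_ne_zero]
    refine mul_ne_zero hA.ne_zero (Multiset.prod_ne_zero fun h => ?_)
    obtain ⟨l, hl, hl0⟩ := Multiset.mem_map.1 h
    exact hν l hl hl0
  refine Polynomial.funext fun x => mul_left_cancel₀ hP.ne_zero ?_
  calc P.det * eval x (P⁻¹ * Q).charpoly = (P * (scalar n x - P⁻¹ * Q)).det := by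
        rw [eval_charpoly, det_mul]
    _ = ((x * ν₁ - μ₁) • A + (x * ν₂ - μ₂) • B).det := by
        rw [Matrix.mul_sub, mul_nonsing_inv_cancel_left _ _ hP, scalar_apply,
          ← smul_one_eq_diagonal, mul_smul_comm, Matrix.mul_one]
        congr 1
        simp only [P, Q, sub_smul, smul_add, smul_smul]
        abel
    _ = A.det * (s.map fun l => (x * ν₁ - μ₁) + l * (x * ν₂ - μ₂)).prod :=
        det_smul_add_smul_of_charpoly_eq_prod hA hAB _ _
    _ = P.det * eval x (s.map fun l => X - C ((μ₁ + l * μ₂) / (ν₁ + l * ν₂))).prod := by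
        rw [hPdet, eval_multiset_prod, Multiset.map_map, mul_assoc, ← Multiset.prod_map_mul]
        congr 2
        refine Multiset.map_congr rfl fun l hl => ?_
        simp only [Function.comp_apply, eval_sub, eval_X, eval_C]
        field_simp [hν l hl]
        ring

end Matrix

section Mobius

variable {K : Type*} [Field K]

theorem mobius_sub_mobius {ν₁ ν₂ μ₁ μ₂ s t : K}
    (hs : ν₁ + s * ν₂ ≠ 0) (ht : ν₁ + t * ν₂ ≠ 0) :
    (μ₁ + s * μ₂) / (ν₁ + s * ν₂) - (μ₁ + t * μ₂) / (ν₁ + t * ν₂) =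
      (ν₁ * μ₂ - ν₂ * μ₁) * (s - t) / ((ν₁ + s * ν₂) * (ν₁ + t * ν₂)) := by
  rw [div_sub_div _ _ hs ht]
  ring

theorem mobius_lt_mobius {ν₁ ν₂ μ₁ μ₂ s t : ℝ} (hs : 0 < ν₁ + s * ν₂) (ht : 0 < ν₁ + t * ν₂)
    (hcross : 0 < ν₁ * μ₂ - ν₂ * μ₁) (hts : t < s) :
    (μ₁ + t * μ₂) / (ν₁ + t * ν₂) < (μ₁ + s * μ₂) / (ν₁ + s * ν₂) := by
  rw [← sub_pos, mobius_sub_mobius hs.ne' ht.ne']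
  exact div_pos (mul_pos hcross (sub_pos.2 hts)) (mul_pos hs ht)

theorem mobius_eccentricity_ratio {ν₁ ν₂ μ₁ μ₂ l₁ l₂ l₃ : K}
    (h₁ : ν₁ + l₁ * ν₂ ≠ 0) (h₂ : ν₁ + l₂ * ν₂ ≠ 0) (h₃ : ν₁ + l₃ * ν₂ ≠ 0)
    (hcross : ν₁ * μ₂ - ν₂ * μ₁ ≠ 0) :
    ((μ₁ + l₁ * μ₂) / (ν₁ + l₁ * ν₂) - (μ₁ + l₂ * μ₂) / (ν₁ + l₂ * ν₂)) /
        ((μ₁ + l₁ * μ₂) / (ν₁ + l₁ * ν₂) - (μ₁ + l₃ * μ₂) / (ν₁ + l₃ * ν₂)) =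
      (ν₁ + l₃ * ν₂) / (ν₁ + l₂ * ν₂) * ((l₁ - l₂) / (l₁ - l₃)) := by
  rw [mobius_sub_mobius h₁ h₂, mobius_sub_mobius h₁ h₃, div_div_div_eq, div_mul_div_comm,
    ← mul_div_mul_left ((ν₁ + l₃ * ν₂) * (l₁ - l₂)) _ (mul_ne_zero hcross h₁)]
  congr 1 <;> ring

theorem affine_sub_div_affine_sub {m₁ m₂ : K} (hm₂ : m₂ ≠ 0)
    (l₁ l₂ l₃ : K) :
    ((m₁ + l₁ * m₂) - (m₁ + l₂ * m₂)) / ((m₁ + l₁ * m₂) - (m₁ + l₃ * m₂)) =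
      (l₁ - l₂) / (l₁ - l₃) := by
  rw [add_sub_add_left_eq_sub, add_sub_add_left_eq_sub, ← sub_mul, ← sub_mul,
    mul_div_mul_right _ _ hm₂]

end Mobius

theorem pencil_eccentricity_transform_general (C1 C2 : Matrix (Fin 3) (Fin 3) ℝ)
    (l1 l2 l3 : ℝ)
    (hC1 : SA1 C1)
    (h12 : l2 < l1) (h23 : l3 < l2)
    (hchar : (C1⁻¹ * C2).charpoly =
      (X - Polynomial.C l1) * (X - Polynomial.C l2) * (X - Polynomial.C l3))
    (ν1 ν2 μ1 μ2 : ℝ)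
    (hν2 : 0 < ν2) (hν : 0 < ν1 + l3 * ν2)
    (hμ : 0 < μ1 + l3 * μ2)
    (hcross : 0 < ν1 * μ2 - ν2 * μ1) :
    let Cν := ν1 • C1 + ν2 • C2
    let Cμ := μ1 • C1 + μ2 • C2
    let lb1 := (μ1 + l1 * μ2) / (ν1 + l1 * ν2)
    let lb2 := (μ1 + l2 * μ2) / (ν1 + l2 * ν2)
    let lb3 := (μ1 + l3 * μ2) / (ν1 + l3 * ν2)
    ((Cν⁻¹ * Cμ).charpoly =
      (X - Polynomial.C lb1) * (X - Polynomial.C lb2) * (X - Polynomial.C lb3)) ∧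
    (lb2 < lb1 ∧ lb3 < lb2 ∧ 0 < lb3) ∧
    Real.sqrt ((lb1 - lb2) / (lb1 - lb3)) =
      Real.sqrt ((ν1 + l3 * ν2) / (ν1 + l2 * ν2)) *
        Real.sqrt ((l1 - l2) / (l1 - l3)) ∧
    (∀ m1 m2 : ℝ, 0 < m2 → 0 < m1 + l3 * m2 →
      Real.sqrt (((m1 + l1 * m2) - (m1 + l2 * m2)) /
          ((m1 + l1 * m2) - (m1 + l3 * m2))) =
        Real.sqrt ((l1 - l2) / (l1 - l3))) := by
  intro Cν Cμ lb1 lb2 lb3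
  have hden : ∀ l, l3 ≤ l → 0 < ν1 + l * ν2 := fun l hl => by nlinarith
  have hd1 : 0 < ν1 + l1 * ν2 := hden l1 (h23.trans h12).le
  have hd2 : 0 < ν1 + l2 * ν2 := hden l2 h23.le
  refine ⟨?_, ⟨mobius_lt_mobius hd1 hd2 hcross h12, mobius_lt_mobius hd2 hν hcross h23,
    div_pos hμ hν⟩, ?_, fun m1 m2 hm2 _ => by rw [affine_sub_div_affine_sub hm2.ne']⟩
  · have hchar' : (C1⁻¹ * C2).charpoly = (({l1, l2, l3} : Multiset ℝ).map (X - C ·)).prod := by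
      simp [hchar, mul_assoc]
    simpa [mul_assoc] using charpoly_inv_mul_of_charpoly_eq_prod
      (isUnit_iff_ne_zero.2 hC1.2.2.ne) hchar' (ν₁ := ν1) (ν₂ := ν2)
      (by simp [hd1.ne', hd2.ne', hν.ne']) μ1 μ2
  · rw [mobius_eccentricity_ratio hd1.ne' hd2.ne' hν.ne' hcross.ne',
      Real.sqrt_mul (div_pos hν hd2).le]

/-- for valid parameters `ν`, `μ` with `ν1μ2 − ν2μ1 > 0`, the numbers
`λ̄ᵢ = (μ1+λᵢμ2)/(ν1+λᵢν2)` are the eigenvalues of `C_ν⁻¹ C_μ`, are ordered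
`λ̄1 > λ̄2 > λ̄3 > 0`, and the pencil eccentricity transforms as stated. In
particular, for `ν = (1,0)` the pencil eccentricity is invariant. -/
theorem pencil_eccentricity_transform (C1 C2 : Matrix (Fin 3) (Fin 3) ℝ)
    (l1 l2 l3 : ℝ)
    (hC1 : SA1 C1) (hC2 : SA1 C2)
    (h12 : l2 < l1) (h23 : l3 < l2) (h3 : 0 < l3)
    (hchar : (C1⁻¹ * C2).charpoly =
      (X - Polynomial.C l1) * (X - Polynomial.C l2) * (X - Polynomial.C l3))
    (hSA3 : ∀ u : Fin 3 → ℝ, u ≠ 0 → u ⬝ᵥ C2.mulVec u = 0 → u ⬝ᵥ C1.mulVec u < 0)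
    (ν1 ν2 μ1 μ2 : ℝ)
    (hν2 : 0 < ν2) (hν : 0 < ν1 + l3 * ν2)
    (hμ2 : 0 < μ2) (hμ : 0 < μ1 + l3 * μ2)
    (hcross : 0 < ν1 * μ2 - ν2 * μ1) :
    let Cν := ν1 • C1 + ν2 • C2
    let Cμ := μ1 • C1 + μ2 • C2
    let lb1 := (μ1 + l1 * μ2) / (ν1 + l1 * ν2)
    let lb2 := (μ1 + l2 * μ2) / (ν1 + l2 * ν2)
    let lb3 := (μ1 + l3 * μ2) / (ν1 + l3 * ν2)
    ((Cν⁻¹ * Cμ).charpoly =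
      (X - Polynomial.C lb1) * (X - Polynomial.C lb2) * (X - Polynomial.C lb3)) ∧
    (lb2 < lb1 ∧ lb3 < lb2 ∧ 0 < lb3) ∧
    Real.sqrt ((lb1 - lb2) / (lb1 - lb3)) =
      Real.sqrt ((ν1 + l3 * ν2) / (ν1 + l2 * ν2)) *
        Real.sqrt ((l1 - l2) / (l1 - l3)) ∧
    (∀ m1 m2 : ℝ, 0 < m2 → 0 < m1 + l3 * m2 →
      Real.sqrt (((m1 + l1 * m2) - (m1 + l2 * m2)) /
          ((m1 + l1 * m2) - (m1 + l3 * m2))) =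
        Real.sqrt ((l1 - l2) / (l1 - l3))) :=
  pencil_eccentricity_transform_general C1 C2 l1 l2 l3 hC1 h12 h23 hchar ν1 ν2 μ1 μ2 hν2 hν hμ
    hcross
end

section
/- Let C1 be a real symmetric 3×3 matrix with (x,y,0)C1(x,y,0)ᵀ > 0 for all (x,y) ≠ (0,0), and let M = (m_{ij}) be a nonsingular real 3×3 matrix with MᵀC1M = diag(1,1,−1). Then for every (x,y) in the closed unit disk 𝔻 = {(x,y) : x²+y² ≤ 1} the denominator m31 x + m32 y + m33 is nonzero, and the projective map M̂(x,y) = ((m11 x + m12 y + m13)/(m31 x + m32 y + m33), (m21 x + m22 y + m23)/(m31 x + m32 y + m33)) is injective on 𝔻. -/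
/-!
Write `w = M (x, y, 1)`. The hypothesis on `M` turns the quadratic form of `C1` at `w` into
`x² + y² - 1`, which is `≤ 0` on the disk, while `C1` is positive definite on the plane
`w₂ = 0`; so `w₂ = 0` would force `w = 0`, impossible for nonsingular `M`. Injectivity then holds
because equal images mean proportional vectors `M (p, 1)` and `M (q, 1)`, hence proportional
`(p, 1)` and `(q, 1)`, i.e. `p = q`.
-/

open Matrix

theorem Matrix.mulVec_dotProduct_mulVec_mulVec {m n R : Type*} [Fintype m] [Fintype n]
    [CommSemiring R] (C : Matrix m m R) (M : Matrix m n R) (u : n → R) :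
    (M *ᵥ u) ⬝ᵥ (C *ᵥ (M *ᵥ u)) = u ⬝ᵥ ((Mᵀ * C * M) *ᵥ u) := by
  rw [Matrix.mul_assoc, ← mulVec_mulVec, ← mulVec_mulVec, dotProduct_mulVec u, vecMul_transpose]

theorem Matrix.mulVec_vec3_apply {α : Type*} [NonUnitalNonAssocSemiring α]
    (M : Matrix (Fin 3) (Fin 3) α) (x y z : α) (i : Fin 3) :
    (M *ᵥ ![x, y, z]) i = M i 0 * x + M i 1 * y + M i 2 * z := by
  rw [mulVec, dotProduct, Fin.sum_univ_three]
  rfl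

section

variable {K : Type*} [Field K]

def Matrix.projectiveMap (M : Matrix (Fin 3) (Fin 3) K) (p : K × K) : K × K :=
  ((M *ᵥ ![p.1, p.2, 1]) 0 / (M *ᵥ ![p.1, p.2, 1]) 2,
    (M *ᵥ ![p.1, p.2, 1]) 1 / (M *ᵥ ![p.1, p.2, 1]) 2)

theorem smul_eq_smul_of_div_eq_div {u v : Fin 3 → K} (hu : u 2 ≠ 0) (hv : v 2 ≠ 0)
    (h0 : u 0 / u 2 = v 0 / v 2) (h1 : u 1 / u 2 = v 1 / v 2) : v 2 • u = u 2 • v := by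
  rw [div_eq_div_iff hu hv] at h0 h1
  ext i
  fin_cases i
  · simpa [mul_comm] using h0
  · simpa [mul_comm] using h1
  · simp [mul_comm]

theorem Matrix.injOn_projectiveMap {M : Matrix (Fin 3) (Fin 3) K}
    (hM : Function.Injective M.mulVec) {S : Set (K × K)}
    (hS : ∀ p ∈ S, (M *ᵥ ![p.1, p.2, 1]) 2 ≠ 0) : S.InjOn M.projectiveMap := by
  intro p hp q hq hpq
  set a : Fin 3 → K := ![p.1, p.2, 1]
  set b : Fin 3 → K := ![q.1, q.2, 1]
  have hprop : (M *ᵥ b) 2 • M *ᵥ a = (M *ᵥ a) 2 • M *ᵥ b :=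
    smul_eq_smul_of_div_eq_div (hS p hp) (hS q hq) (congrArg Prod.fst hpq)
      (congrArg Prod.snd hpq)
  have hab : (M *ᵥ b) 2 • a = (M *ᵥ a) 2 • b := hM (by rwa [mulVec_smul, mulVec_smul])
  have h2 : (M *ᵥ b) 2 = (M *ᵥ a) 2 := by simpa [a, b] using congrFun hab 2
  rw [h2] at hab
  have hab' : a = b := smul_right_injective _ (hS p hp) hab
  exact Prod.ext (by simpa [a, b] using congrFun hab' 0) (by simpa [a, b] using congrFun hab' 1)

end

section

variable {C M : Matrix (Fin 3) (Fin 3) ℝ}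

theorem dotProduct_mulVec_mulVec_homog (hdiag : Mᵀ * C * M = diagonal ![1, 1, -1]) (x y : ℝ) :
    (M *ᵥ ![x, y, 1]) ⬝ᵥ (C *ᵥ (M *ᵥ ![x, y, 1])) = x ^ 2 + y ^ 2 - 1 := by
  rw [mulVec_dotProduct_mulVec_mulVec, hdiag, vec3_dotProduct]
  simp only [mulVec_diagonal, cons_val_zero, cons_val_one, cons_val, one_mul, mul_one, mul_neg]
  ring

theorem mulVec_homog_two_ne_zero
    (hpos : ∀ x y : ℝ, (x, y) ≠ (0, 0) → 0 < ![x, y, 0] ⬝ᵥ C.mulVec ![x, y, 0])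
    (hM : M.det ≠ 0) (hdiag : Mᵀ * C * M = diagonal ![1, 1, -1]) {x y : ℝ}
    (hxy : x ^ 2 + y ^ 2 ≤ 1) : (M *ᵥ ![x, y, 1]) 2 ≠ 0 := by
  set w := M *ᵥ ![x, y, 1] with hw_def
  intro hw2
  have hw : w = ![w 0, w 1, 0] := by
    ext i; fin_cases i <;> simp [hw2]
  have hw01 : (w 0, w 1) ≠ (0, 0) := by
    intro h
    obtain ⟨h0, h1⟩ := Prod.mk.inj h
    have hker : M *ᵥ ![x, y, 1] = M *ᵥ 0 := by
      rw [mulVec_zero, ← hw_def, hw, h0, h1]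
      simp
    simpa using congrFun (mulVec_injective_of_det_ne_zero hM hker) 2
  have hQ := hpos _ _ hw01
  rw [← hw, dotProduct_mulVec_mulVec_homog hdiag] at hQ
  linarith

end

theorem projective_map_injective_on_disk_general (C1 M : Matrix (Fin 3) (Fin 3) ℝ)
    (hpos : ∀ x y : ℝ, (x, y) ≠ (0, 0) → 0 < ![x, y, 0] ⬝ᵥ C1.mulVec ![x, y, 0])
    (hM : M.det ≠ 0)
    (hdiag : Mᵀ * C1 * M = Matrix.diagonal ![1, 1, -1]) :
    (∀ p : ℝ × ℝ, p.1 ^ 2 + p.2 ^ 2 ≤ 1 →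
      M 2 0 * p.1 + M 2 1 * p.2 + M 2 2 ≠ 0) ∧
    Set.InjOn (fun p : ℝ × ℝ =>
      ((M 0 0 * p.1 + M 0 1 * p.2 + M 0 2) / (M 2 0 * p.1 + M 2 1 * p.2 + M 2 2),
       (M 1 0 * p.1 + M 1 1 * p.2 + M 1 2) / (M 2 0 * p.1 + M 2 1 * p.2 + M 2 2)))
      {p : ℝ × ℝ | p.1 ^ 2 + p.2 ^ 2 ≤ 1} := by
  have hden : ∀ p ∈ {p : ℝ × ℝ | p.1 ^ 2 + p.2 ^ 2 ≤ 1}, (M *ᵥ ![p.1, p.2, 1]) 2 ≠ 0 :=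
    fun p hp => mulVec_homog_two_ne_zero hpos hM hdiag hp
  have hmap : M.projectiveMap = fun p : ℝ × ℝ =>
      ((M 0 0 * p.1 + M 0 1 * p.2 + M 0 2) / (M 2 0 * p.1 + M 2 1 * p.2 + M 2 2),
       (M 1 0 * p.1 + M 1 1 * p.2 + M 1 2) / (M 2 0 * p.1 + M 2 1 * p.2 + M 2 2)) := by
    ext p <;> simp only [projectiveMap, mulVec_vec3_apply, mul_one]
  refine ⟨fun p hp => by simpa [mulVec_vec3_apply] using hden p hp, ?_⟩
  exact hmap ▸ injOn_projectiveMap (mulVec_injective_of_det_ne_zero hM) hden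

/-- if `(x,y,0)C1(x,y,0)ᵀ > 0` for `(x,y) ≠ (0,0)` and
`MᵀC1M = diag(1,1,−1)` with `M` nonsingular, then the denominator
`m31 x + m32 y + m33` of the projective map `M̂` is nonzero on the closed
unit disk, and `M̂` is injective there. -/
theorem projective_map_injective_on_disk (C1 M : Matrix (Fin 3) (Fin 3) ℝ)
    (hsym : C1.IsSymm)
    (hpos : ∀ x y : ℝ, (x, y) ≠ (0, 0) → 0 < ![x, y, 0] ⬝ᵥ C1.mulVec ![x, y, 0])
    (hM : M.det ≠ 0)
    (hdiag : Mᵀ * C1 * M = Matrix.diagonal ![1, 1, -1]) :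
    (∀ p : ℝ × ℝ, p.1 ^ 2 + p.2 ^ 2 ≤ 1 →
      M 2 0 * p.1 + M 2 1 * p.2 + M 2 2 ≠ 0) ∧
    Set.InjOn (fun p : ℝ × ℝ =>
      ((M 0 0 * p.1 + M 0 1 * p.2 + M 0 2) / (M 2 0 * p.1 + M 2 1 * p.2 + M 2 2),
       (M 1 0 * p.1 + M 1 1 * p.2 + M 1 2) / (M 2 0 * p.1 + M 2 1 * p.2 + M 2 2)))
      {p : ℝ × ℝ | p.1 ^ 2 + p.2 ^ 2 ≤ 1} :=
  projective_map_injective_on_disk_general C1 M hpos hM hdiag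
end

section
/- Define G(e,f) = (2√e/(1+e), 2√e f/(f²+e)). Then for every (e,f) ∈ Δ = {(e,f) : 0 < f < e < 1}, G(e,f) ∈ Δ and the billiard rotation number is invariant under G: ρ̂(G(e,f)) = ρ̂(e,f). -/
/-!
`G` is Gauss's (ascending Landen) transformation. With `e' = 2√e/(1+e)`, the substitution
`sin ψ = (1+e) sin φ / (1 + e sin² φ)` satisfies
`1 - e'² sin² ψ = ((1 - e sin² φ)/(1 + e sin² φ))²`, which turns the integrand of `F(·, e')`
into `(1+e)` times that of `F(·, e)`: `F(ψ(φ), e') = (1+e) F(φ, e)`. As `ψ(π/2) = π/2`, also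
`K(e') = (1+e) K(e)`, and the factor `1+e` cancels in `ρ̂`. What remains is the algebraic
identity `ω̂(G(e,f)) = ψ(ω̂(e,f))`.
-/

open Real

open Set intervalIntegral

noncomputable def landenModulus (e : ℝ) : ℝ := 2 * √e / (1 + e)

noncomputable def landenSin (e s : ℝ) : ℝ := (1 + e) * s / (1 + e * s ^ 2)

noncomputable def landenAngle (e φ : ℝ) : ℝ := arcsin (landenSin e (sin φ))

noncomputable def landenAngleDeriv (e x : ℝ) : ℝ :=
  (1 + e) * (1 - e * sin x ^ 2) / ((1 + e * sin x ^ 2) * √(1 - e ^ 2 * sin x ^ 2))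

noncomputable def gaussF (e f : ℝ) : ℝ := 2 * √e * f / (f ^ 2 + e)

lemma one_sub_sq_mul_sin_sq_pos {e : ℝ} (he : e ^ 2 < 1) (τ : ℝ) :
    0 < 1 - e ^ 2 * sin τ ^ 2 := by
  nlinarith [sin_sq_le_one τ, sq_nonneg e, sq_nonneg (sin τ)]

lemma continuous_ellF_integrand {e : ℝ} (he : e ^ 2 < 1) :
    Continuous fun τ => 1 / √(1 - e ^ 2 * sin τ ^ 2) :=
  continuous_const.div (by fun_prop) fun τ => (sqrt_pos.2 (one_sub_sq_mul_sin_sq_pos he τ)).ne'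

section Landen

variable {e : ℝ}

lemma landenModulus_sq (he : 0 ≤ e) : landenModulus e ^ 2 = 4 * e / (1 + e) ^ 2 := by
  rw [landenModulus, div_pow, mul_pow, sq_sqrt he]
  norm_num

lemma landenModulus_sq_lt_one (he0 : 0 ≤ e) (he1 : e < 1) : landenModulus e ^ 2 < 1 := by
  rw [landenModulus_sq he0, div_lt_one (by positivity)]
  nlinarith

lemma landenModulus_lt_one (he0 : 0 ≤ e) (he1 : e < 1) : landenModulus e < 1 :=
  (pow_lt_one_iff_of_nonneg (by unfold landenModulus; positivity) two_ne_zero).1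
    (landenModulus_sq_lt_one he0 he1)

lemma one_add_mul_sq_pos (he : 0 ≤ e) (s : ℝ) : 0 < 1 + e * s ^ 2 := by positivity

lemma one_sub_landenSin_sq (he : 0 ≤ e) (s : ℝ) :
    1 - landenSin e s ^ 2 = (1 - s ^ 2) * (1 - e ^ 2 * s ^ 2) / (1 + e * s ^ 2) ^ 2 := by
  have := (one_add_mul_sq_pos he s).ne'
  rw [landenSin]
  field_simp
  ring

lemma landenSin_sq_le_one (he0 : 0 ≤ e) (he1 : e ≤ 1) {s : ℝ} (hs : s ^ 2 ≤ 1) :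
    landenSin e s ^ 2 ≤ 1 := by
  have hes : e ^ 2 * s ^ 2 ≤ 1 := by nlinarith
  have hid := one_sub_landenSin_sq he0 s
  have hnonneg : 0 ≤ (1 - s ^ 2) * (1 - e ^ 2 * s ^ 2) / (1 + e * s ^ 2) ^ 2 := by
    apply div_nonneg (mul_nonneg ?_ ?_) (sq_nonneg _) <;> linarith
  linarith

lemma one_sub_landenModulus_sq_mul_landenSin_sq (he : 0 ≤ e) (s : ℝ) :
    1 - landenModulus e ^ 2 * landenSin e s ^ 2 = ((1 - e * s ^ 2) / (1 + e * s ^ 2)) ^ 2 := by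
  have := (one_add_mul_sq_pos he s).ne'
  rw [landenModulus_sq he, landenSin]
  field_simp
  ring

lemma hasDerivAt_landenSin (he : 0 ≤ e) (s : ℝ) :
    HasDerivAt (landenSin e) ((1 + e) * (1 - e * s ^ 2) / (1 + e * s ^ 2) ^ 2) s := by
  have h := ((hasDerivAt_id' s).const_mul (1 + e)).div
    (((hasDerivAt_pow 2 s).const_mul e).const_add 1) (one_add_mul_sq_pos he s).ne'
  refine h.congr_deriv ?_
  norm_num
  ring

lemma sin_landenAngle (he0 : 0 ≤ e) (he1 : e ≤ 1) (φ : ℝ) :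
    sin (landenAngle e φ) = landenSin e (sin φ) := by
  have h := abs_le.1 <| (sq_le_one_iff_abs_le_one _).1 <|
    landenSin_sq_le_one he0 he1 (sin_sq_le_one φ)
  exact sin_arcsin h.1 h.2

lemma landenAngle_zero : landenAngle e 0 = 0 := by
  simp [landenAngle, landenSin]

lemma landenAngle_pi_div_two (he : 0 ≤ e) : landenAngle e (π / 2) = π / 2 := by
  have : (1 : ℝ) + e ≠ 0 := by positivity
  simp [landenAngle, landenSin, div_self this]

lemma continuous_landenAngle (he : 0 ≤ e) : Continuous (landenAngle e) :=
  continuous_arcsin.comp <| Continuous.div (by fun_prop) (by fun_prop)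
    fun x => (one_add_mul_sq_pos he _).ne'

lemma continuous_landenAngleDeriv (he0 : 0 ≤ e) (he1 : e < 1) :
    Continuous (landenAngleDeriv e) :=
  Continuous.div (by fun_prop) (by fun_prop) fun x =>
    (mul_pos (one_add_mul_sq_pos he0 _)
      (sqrt_pos.2 (one_sub_sq_mul_sin_sq_pos (by nlinarith) x))).ne'

lemma hasDerivAt_landenAngle (he0 : 0 ≤ e) (he1 : e < 1) {x : ℝ} (hx : 0 < cos x) :
    HasDerivAt (landenAngle e) (landenAngleDeriv e x) x := by
  have hq : 0 < 1 - e ^ 2 * sin x ^ 2 := one_sub_sq_mul_sin_sq_pos (by nlinarith) x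
  have hd := one_add_mul_sq_pos he0 (sin x)
  have hL : 1 - landenSin e (sin x) ^ 2
      = (cos x * √(1 - e ^ 2 * sin x ^ 2) / (1 + e * sin x ^ 2)) ^ 2 := by
    rw [one_sub_landenSin_sq he0, ← cos_sq', div_pow, mul_pow, sq_sqrt hq.le]
  have hL1 : landenSin e (sin x) ^ 2 < 1 := by
    have : 0 < (cos x * √(1 - e ^ 2 * sin x ^ 2) / (1 + e * sin x ^ 2)) ^ 2 := by positivity
    linarith
  have harcsin := hasDerivAt_arcsin (x := landenSin e (sin x))
    (by rintro h; rw [h] at hL1; norm_num at hL1) (by rintro h; rw [h] at hL1; norm_num at hL1)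
  refine (harcsin.comp x ((hasDerivAt_landenSin he0 (sin x)).comp x
    (hasDerivAt_sin x))).congr_deriv ?_
  rw [hL, sqrt_sq (by positivity), landenAngleDeriv]
  field_simp

lemma ellF_integrand_landenAngle_mul_deriv (he0 : 0 ≤ e) (he1 : e < 1) (x : ℝ) :
    1 / √(1 - landenModulus e ^ 2 * sin (landenAngle e x) ^ 2) * landenAngleDeriv e x
      = (1 + e) * (1 / √(1 - e ^ 2 * sin x ^ 2)) := by
  have hd := one_add_mul_sq_pos he0 (sin x)
  have hes : 0 < 1 - e * sin x ^ 2 := by nlinarith [sin_sq_le_one x]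
  have hq : 0 < √(1 - e ^ 2 * sin x ^ 2) :=
    sqrt_pos.2 (one_sub_sq_mul_sin_sq_pos (by nlinarith) x)
  rw [sin_landenAngle he0 he1.le, one_sub_landenModulus_sq_mul_landenSin_sq he0,
    sqrt_sq (by positivity), landenAngleDeriv]
  field_simp

theorem ellF_landenAngle (he0 : 0 ≤ e) (he1 : e < 1) {φ : ℝ}
    (hφ : φ ∈ Icc (-(π / 2)) (π / 2)) :
    ellF (landenAngle e φ) (landenModulus e) = (1 + e) * ellF φ e := by
  -- `landenAngle e` has vertical tangents at `±π/2`, so derivatives are taken inside only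
  have hderiv : ∀ x ∈ Ioo (min 0 φ) (max 0 φ),
      HasDerivWithinAt (landenAngle e) (landenAngleDeriv e x) (Ioi x) x := by
    intro x hx
    have hx' : x ∈ Ioo (-(π / 2)) (π / 2) := by
      rcases le_total 0 φ with h | h <;> simp_all <;> constructor <;> linarith [hφ.1, hφ.2]
    exact (hasDerivAt_landenAngle he0 he1 (cos_pos_of_mem_Ioo hx')).hasDerivWithinAt
  have hsubst := integral_comp_mul_deriv'' (continuous_landenAngle he0).continuousOn hderiv
    (continuous_landenAngleDeriv he0 he1).continuousOn
    (continuous_ellF_integrand (landenModulus_sq_lt_one he0 he1)).continuousOn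
  rw [landenAngle_zero] at hsubst
  simp only [Function.comp_apply, ellF_integrand_landenAngle_mul_deriv he0 he1,
    integral_const_mul] at hsubst
  exact hsubst.symm

theorem ellK_landenModulus (he0 : 0 ≤ e) (he1 : e < 1) :
    ellK (landenModulus e) = (1 + e) * ellK e := by
  rw [ellK, ellK, ← ellF_landenAngle he0 he1 ⟨by linarith [pi_pos], le_rfl⟩,
    landenAngle_pi_div_two he0]

end Landen

section Gauss

variable {e f : ℝ}

lemma gaussF_mem_delta (hf : 0 < f) (hfe : f < e) (he : e < 1) :
    0 < gaussF e f ∧ gaussF e f < landenModulus e ∧ landenModulus e < 1 := by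
  have he0 : 0 < e := hf.trans hfe
  have hse : 0 < √e := sqrt_pos.2 he0
  refine ⟨by unfold gaussF; positivity, ?_, landenModulus_lt_one he0.le he⟩
  rw [gaussF, landenModulus, div_lt_div_iff₀ (by positivity) (by positivity)]
  nlinarith [mul_pos hse (mul_pos (sub_pos.2 (hfe.trans he)) (sub_pos.2 hfe))]

lemma omegaHat_gaussF (hf : 0 < f) (hfe : f < e) (he : e < 1) :
    omegaHat (landenModulus e) (gaussF e f) = landenAngle e (omegaHat e f) := by
  have he0 : 0 < e := hf.trans hfe
  have h1f : 0 < 1 - f ^ 2 := by nlinarith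
  have hf2e : f ^ 2 < e := by nlinarith
  set A := (e ^ 2 - f ^ 2) / (e ^ 2 * (1 - f ^ 2)) with hA
  have hA0 : 0 ≤ A := div_nonneg (by nlinarith) (by positivity)
  have hA1 : A ≤ 1 := by
    rw [hA, div_le_one (by positivity)]
    nlinarith [mul_pos (mul_pos hf hf) (sub_pos.2 (show e * e < 1 by nlinarith))]
  have hsin : sin (omegaHat e f) = √A :=
    sin_arcsin (by linarith [sqrt_nonneg A]) (sqrt_le_one.2 hA1)
  have hf' : gaussF e f ^ 2 = 4 * e * f ^ 2 / (f ^ 2 + e) ^ 2 := by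
    rw [gaussF, div_pow, mul_pow, mul_pow, sq_sqrt he0.le]
    ring
  have hden : 0 < landenModulus e ^ 2 * (1 - gaussF e f ^ 2) := by
    refine mul_pos (by rw [landenModulus_sq he0.le]; positivity) ?_
    rw [hf', sub_pos, div_lt_one (by positivity)]
    nlinarith [sq_nonneg (e - f ^ 2)]
  rw [landenAngle, hsin, omegaHat]
  congr 1
  -- both squares equal `(e² - f²)(1 - f²)/(e - f²)²`
  rw [← sqrt_sq (show 0 ≤ landenSin e √A by unfold landenSin; positivity)]
  congr 1
  rw [landenSin, div_pow, mul_pow, sq_sqrt hA0, div_eq_div_iff hden.ne' (by positivity),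
    landenModulus_sq he0.le, hf', hA]
  field_simp
  ring

end Gauss

/-- Gauss symmetry: `G(e,f) = (2√e/(1+e), 2√e f/(f²+e))` maps
`Δ` into itself and leaves the billiard rotation number invariant. -/
theorem gauss_symmetry (e f : ℝ) (hf : 0 < f) (hfe : f < e) (he : e < 1) :
    let e' := 2 * Real.sqrt e / (1 + e)
    let f' := 2 * Real.sqrt e * f / (f ^ 2 + e)
    (0 < f' ∧ f' < e' ∧ e' < 1) ∧ rhoHat e' f' = rhoHat e f := by
  have he0 : 0 ≤ e := (hf.trans hfe).le
  refine ⟨gaussF_mem_delta hf hfe he, ?_⟩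
  change rhoHat (landenModulus e) (gaussF e f) = rhoHat e f
  rw [rhoHat, rhoHat, omegaHat_gaussF hf hfe he,
    ellF_landenAngle (φ := omegaHat e f) he0 he (arcsin_mem_Icc _), ellK_landenModulus he0 he,
    mul_left_comm, mul_div_mul_left _ _ (by positivity)]
end
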